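/- Let α ∈ (0,1), x ∈ ℝⁿ, μ* ∈ ℝⁿ, and let σ*² ∈ ℝⁿ be a vector of nonnegative variances. Let D* := diag(√(σ*²₁),…,√(σ*²ₙ)). Then every probability measure P on ℝⁿ with finite second moments, mean μ* and covariance matrix diag(σ*²) (i.e., with uncorrelated coordinates of variances σ*²ᵢ) satisfies P{a ∈ ℝⁿ : aᵀx ≤ 0} ≥ 1 − α if and only if μ*ᵀx + √((1−α)/α)·‖D*x‖₂ ≤ 0. -/

import Mathlib

open MeasureTheory

noncomputable section

/-- Inner product `aᵀx` on `ℝⁿ`. -/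
def dotv {n : ℕ} (a x : Fin n → ℝ) : ℝ := ∑ i, a i * x i

/-- Mean vector of a probability measure on `ℝⁿ`. -/
def meanVec {n : ℕ} (P : Measure (Fin n → ℝ)) : Fin n → ℝ := fun i => ∫ a, a i ∂P

/-- Covariance matrix of a probability measure on `ℝⁿ`. -/
def covMat {n : ℕ} (P : Measure (Fin n → ℝ)) : Matrix (Fin n) (Fin n) ℝ :=
  Matrix.of fun i j => ∫ a, (a i - meanVec P i) * (a j - meanVec P j) ∂P

/-- Finite second moments. -/
def hasFiniteSecondMoments {n : ℕ} (P : Measure (Fin n → ℝ)) : Prop :=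
  (∀ i, Integrable (fun a => a i) P) ∧ ∀ i j, Integrable (fun a => a i * a j) P

/-- The radius function of a set `S ⊆ ℝⁿ`:
`r(x) = (1/2)·sup_{a₁,a₂ ∈ S} |a₁ᵀx − a₂ᵀx|`. -/
def radius {n : ℕ} (S : Set (Fin n → ℝ)) (x : Fin n → ℝ) : ℝ :=
  (1/2) * sSup {y | ∃ a₁ ∈ S, ∃ a₂ ∈ S, y = |dotv a₁ x - dotv a₂ x|}

/-- Sample mean of `N` samples. -/
def sampleMean {n N : ℕ} (a : Fin N → Fin n → ℝ) : Fin n → ℝ :=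
  fun i => (∑ j, a j i) / N

/-- Sample covariance of `N` samples. -/
def sampleCov {n N : ℕ} (a : Fin N → Fin n → ℝ) : Matrix (Fin n) (Fin n) ℝ :=
  Matrix.of fun i k => (∑ j, (a j i - sampleMean a i) * (a j k - sampleMean a k)) / N

/-- Euclidean norm on `ℝⁿ`. -/
def euclNorm {n : ℕ} (v : Fin n → ℝ) : ℝ := Real.sqrt (∑ i, (v i) ^ 2)

/-! The direction `←` is Cantelli's one-sided Chebyshev inequality for the scalar `aᵀx`, whose
mean is `μ*ᵀx` and whose variance is `‖D*x‖²`. For `→`, Cantelli's bound is attained: if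
`μ*ᵀx + k‖D*x‖ > 0` with `k = √((1-α)/α)`, take `z < k` close to `k` and a finitely supported law
with mean `μ*` and covariance `diag σ*²` under which `aᵀx = μ*ᵀx + ‖D*x‖ ξ`, where `ξ` is the
standardized two-point variable equal to `z` with probability `1/(1+z²)`. Then
`P{aᵀx ≤ 0} ≤ z²/(1+z²) < 1-α`. -/

open ProbabilityTheory Matrix

section Cantelli

variable {Ω : Type*} [MeasurableSpace Ω] {P : Measure Ω} [IsProbabilityMeasure P] {X : Ω → ℝ}

-- Markov's inequality for `(X - E[X] + u)²` with the optimal shift `u = Var[X] / t`.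
theorem measureReal_integral_add_le_le_variance_div (hX : MemLp X 2 P) {t : ℝ} (ht : 0 < t) :
    P.real {ω | P[X] + t ≤ X ω} ≤ Var[X; P] / (Var[X; P] + t ^ 2) := by
  set v := Var[X; P]
  have hv : 0 ≤ v := variance_nonneg X P
  set u := v / t
  have hu0 : 0 ≤ u := div_nonneg hv ht.le
  set Y : Ω → ℝ := fun ω => X ω + (u - P[X])
  have hY : MemLp Y 2 P := hX.add (memLp_const _)
  have hYmean : P[Y] = u := by
    simp [Y, integral_add (hX.integrable one_le_two) (integrable_const _)]
  have hYsq : P[Y ^ 2] = v + u ^ 2 := by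
    have := variance_eq_sub hY
    rw [variance_add_const hX.aestronglyMeasurable, hYmean] at this
    linarith
  have hsub : {ω | P[X] + t ≤ X ω} ⊆ {ω | (t + u) ^ 2 ≤ Y ω ^ 2} := fun ω (hω : _ ≤ X ω) => by
    have : t + u ≤ Y ω := by simp only [Y]; linarith
    exact pow_le_pow_left₀ (by linarith) this 2
  calc P.real {ω | P[X] + t ≤ X ω} ≤ P.real {ω | (t + u) ^ 2 ≤ Y ω ^ 2} := measureReal_mono hsub
    _ ≤ (v + u ^ 2) / (t + u) ^ 2 := by
      rw [le_div_iff₀ (by positivity), mul_comm, ← hYsq]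
      exact mul_meas_ge_le_integral_of_nonneg (ae_of_all P fun ω => sq_nonneg (Y ω))
        hY.integrable_sq _
    _ = v / (v + t ^ 2) := by
      simp only [u]
      field_simp
      ring

theorem measureReal_pos_le_of_integral_add_mul_sqrt_variance_nonpos (hX : MemLp X 2 P)
    {α : ℝ} (hα : α ∈ Set.Ioo 0 1)
    (h : P[X] + Real.sqrt ((1 - α) / α) * Real.sqrt Var[X; P] ≤ 0) :
    P.real {ω | 0 < X ω} ≤ α := by
  obtain ⟨hα0, hα1⟩ := hα
  set m := P[X]
  set v := Var[X; P]
  have hv : 0 ≤ v := variance_nonneg X P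
  have hk : 0 < (1 - α) / α := div_pos (by linarith) hα0
  have hsq : (1 - α) / α * v ≤ m ^ 2 := by
    rw [← Real.sq_sqrt hk.le, ← Real.sq_sqrt hv, ← mul_pow, ← neg_sq m]
    exact pow_le_pow_left₀ (by positivity) (by linarith) 2
  have hm0 : m ≤ 0 := by
    nlinarith [mul_nonneg (Real.sqrt_nonneg ((1 - α) / α)) (Real.sqrt_nonneg v)]
  rcases hm0.lt_or_eq with hm | hm
  · calc P.real {ω | 0 < X ω} ≤ P.real {ω | m + -m ≤ X ω} :=
          measureReal_mono fun ω (hω : 0 < X ω) => by simp only [Set.mem_ofPred_eq]; linarith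
      _ ≤ v / (v + (-m) ^ 2) := measureReal_integral_add_le_le_variance_div hX (by linarith)
      _ ≤ α := by
          rw [div_le_iff₀ (by nlinarith)]
          rw [div_mul_eq_mul_div, div_le_iff₀ hα0] at hsq
          nlinarith
  · have hv0 : v = 0 := by
      rw [hm] at hsq
      nlinarith [div_pos (by linarith : (0:ℝ) < 1 - α) hα0]
    have hae : ∀ᵐ ω ∂P, ¬ 0 < X ω := by
      filter_upwards [ae_eq_integral_of_variance_eq_zero hX hv0] with ω hω
      rw [hω]; exact hm.le.not_gt
    have hnull : P {ω | 0 < X ω} = 0 := by simpa [ae_iff] using hae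
    rw [measureReal_def, hnull, ENNReal.toReal_zero]
    exact hα0.le

end Cantelli

section Moments

variable {n : ℕ} {P : Measure (Fin n → ℝ)}

theorem memLp_two_eval (hP : hasFiniteSecondMoments P) (i : Fin n) :
    MemLp (fun a => a i) 2 P :=
  (memLp_two_iff_integrable_sq (measurable_pi_apply i).aestronglyMeasurable).2 (by
    simpa only [sq] using hP.2 i i)

theorem memLp_two_dotv (hP : hasFiniteSecondMoments P) (x : Fin n → ℝ) :
    MemLp (fun a => dotv a x) 2 P :=
  memLp_finsetSum _ fun i _ => (memLp_two_eval hP i).mul_const (x i)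

theorem integral_dotv (hP : hasFiniteSecondMoments P) (x : Fin n → ℝ) :
    P[fun a => dotv a x] = dotv (meanVec P) x := by
  simp only [dotv]
  rw [integral_finsetSum _ fun i _ => (hP.1 i).mul_const (x i)]
  simp only [integral_mul_const, meanVec]

theorem variance_dotv [IsFiniteMeasure P] (hP : hasFiniteSecondMoments P) (x : Fin n → ℝ) :
    Var[fun a => dotv a x; P] = x ⬝ᵥ (covMat P *ᵥ x) := by
  simp only [dotv]
  rw [variance_fun_sum fun i => (memLp_two_eval hP i).mul_const (x i)]
  simp only [covariance_mul_const_left, covariance_mul_const_right, dotProduct, mulVec,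
    Finset.mul_sum]
  refine Finset.sum_congr rfl fun i _ => Finset.sum_congr rfl fun j _ => ?_
  simp only [covMat, Matrix.of_apply, covariance, meanVec]
  ring

theorem ofReal_one_sub_le_measure_dotv_nonpos [IsProbabilityMeasure P]
    (hP : hasFiniteSecondMoments P) {α : ℝ} (hα : α ∈ Set.Ioo 0 1) {x : Fin n → ℝ}
    (h : dotv (meanVec P) x + Real.sqrt ((1 - α) / α) * Real.sqrt (x ⬝ᵥ (covMat P *ᵥ x)) ≤ 0) :
    ENNReal.ofReal (1 - α) ≤ P {a | dotv a x ≤ 0} := by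
  have hpos := measureReal_pos_le_of_integral_add_mul_sqrt_variance_nonpos (memLp_two_dotv hP x)
    hα (by rwa [integral_dotv hP, variance_dotv hP])
  have hmeas : MeasurableSet {a : Fin n → ℝ | 0 < dotv a x} :=
    measurableSet_lt measurable_const (by unfold dotv; fun_prop)
  have hcompl : {a | dotv a x ≤ 0} = {a | 0 < dotv a x}ᶜ := by ext; simp
  rw [← ofReal_measureReal, hcompl, probReal_compl_eq_one_sub hmeas]
  exact ENNReal.ofReal_le_ofReal (by linarith)

end Moments

section CenteredConfig

variable {Ω Ω' ι : Type*} [Fintype Ω] [Fintype Ω'] [Fintype ι] {n : ℕ}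

-- A finitely supported law on `ℝⁿ` (atom `B ω` with mass `w ω`) of mean zero and second moment `C`.
structure IsCenteredConfig (w : Ω → ℝ) (B : Ω → Fin n → ℝ) (C : Matrix (Fin n) (Fin n) ℝ) :
    Prop where
  nonneg : ∀ ω, 0 ≤ w ω
  sum_eq_one : ∑ ω, w ω = 1
  mean_eq_zero : ∀ i, ∑ ω, w ω * B ω i = 0
  secondMoment_eq : ∀ i j, ∑ ω, w ω * (B ω i * B ω j) = C i j

namespace IsCenteredConfig

variable {w : Ω → ℝ} {B : Ω → Fin n → ℝ} {C : Matrix (Fin n) (Fin n) ℝ}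
  {w' : Ω' → ℝ} {B' : Ω' → Fin n → ℝ} {C' : Matrix (Fin n) (Fin n) ℝ}

-- Adding independent centered vectors adds their second moments.
theorem prod (h : IsCenteredConfig w B C) (h' : IsCenteredConfig w' B' C') :
    IsCenteredConfig (fun ω : Ω × Ω' => w ω.1 * w' ω.2) (fun ω => B ω.1 + B' ω.2) (C + C') where
  nonneg ω := mul_nonneg (h.nonneg ω.1) (h'.nonneg ω.2)
  sum_eq_one := by
    rw [Fintype.sum_prod_type, ← Finset.sum_mul_sum, h.sum_eq_one, h'.sum_eq_one, one_mul]
  mean_eq_zero i := by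
    simp only [Fintype.sum_prod_type, Pi.add_apply, mul_add, Finset.sum_add_distrib]
    simp only [mul_right_comm (w _) (w' _) (B _ i), mul_assoc (w _) (w' _) (B' _ i),
      ← Finset.sum_mul_sum, h.mean_eq_zero, h'.mean_eq_zero]
    simp
  secondMoment_eq i j := by
    have expand : ∀ a b, w a * w' b * ((B a + B' b) i * (B a + B' b) j) =
        w a * (B a i * B a j) * w' b + w a * B a i * (w' b * B' b j)
          + w a * B a j * (w' b * B' b i) + w a * (w' b * (B' b i * B' b j)) := fun a b => by
      simp only [Pi.add_apply]; ring
    simp only [Fintype.sum_prod_type, expand, Finset.sum_add_distrib,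
      ← Finset.mul_sum, ← Finset.sum_mul, h.mean_eq_zero, h'.mean_eq_zero, h.secondMoment_eq,
      h'.secondMoment_eq, h.sum_eq_one, h'.sum_eq_one, Matrix.add_apply]
    ring

end IsCenteredConfig

def twoPointWeight (z : ℝ) (b : Bool) : ℝ := if b then 1 / (1 + z ^ 2) else z ^ 2 / (1 + z ^ 2)

def twoPointValue (z : ℝ) (b : Bool) : ℝ := if b then z else -z⁻¹

theorem isCenteredConfig_twoPoint {z : ℝ} (hz : 0 < z) (y : Fin n → ℝ) :
    IsCenteredConfig (twoPointWeight z) (fun b => twoPointValue z b • y) (vecMulVec y y) where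
  nonneg b := by unfold twoPointWeight; split <;> positivity
  sum_eq_one := by
    simp only [twoPointWeight, Fintype.sum_bool, if_true, Bool.false_eq_true, if_false]
    field_simp
  mean_eq_zero i := by
    simp only [twoPointWeight, twoPointValue, Fintype.sum_bool, Pi.smul_apply, smul_eq_mul,
      if_true, Bool.false_eq_true, if_false]
    field_simp
    ring
  secondMoment_eq i j := by
    simp only [twoPointWeight, twoPointValue, Fintype.sum_bool, Pi.smul_apply, smul_eq_mul,
      vecMulVec_apply, if_true, Bool.false_eq_true, if_false]
    field_simp
    ring

theorem isCenteredConfig_signedColumns [Nonempty ι] (M : Matrix (Fin n) ι ℝ) :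
    IsCenteredConfig (fun _ : Bool × ι => (2 * Fintype.card ι : ℝ)⁻¹)
      (fun ω i => (if ω.1 then 1 else -1) * Real.sqrt (Fintype.card ι) * M i ω.2) (M * Mᵀ) where
  nonneg _ := by positivity
  sum_eq_one := by simp [Fintype.card_bool]; field_simp
  mean_eq_zero i := by simp [Fintype.sum_prod_type]
  secondMoment_eq i j := by
    have hcard : (0 : ℝ) < Fintype.card ι := Nat.cast_pos.2 Fintype.card_pos
    simp only [Fintype.sum_prod_type, Fintype.sum_bool, if_true, Bool.false_eq_true, if_false,
      Matrix.mul_apply, Matrix.transpose_apply, ← Finset.sum_add_distrib]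
    refine Finset.sum_congr rfl fun k _ => ?_
    field_simp
    rw [Real.sq_sqrt hcard.le]
    ring

end CenteredConfig

section AtomicMeasure

variable {E Ω : Type*} [MeasurableSpace E] [Fintype Ω] (w : Ω → ℝ) (φ : Ω → E)

def atomicMeasure : Measure E := ∑ ω, ENNReal.ofReal (w ω) • Measure.dirac (φ ω)

variable {w} in
theorem isProbabilityMeasure_atomicMeasure (hw : ∀ ω, 0 ≤ w ω) (hw1 : ∑ ω, w ω = 1) :
    IsProbabilityMeasure (atomicMeasure w φ) := by
  constructor
  simp [atomicMeasure, ← ENNReal.ofReal_sum_of_nonneg fun ω _ => hw ω, hw1]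

variable [MeasurableSingletonClass E]

theorem integrable_atomicMeasure (f : E → ℝ) : Integrable f (atomicMeasure w φ) :=
  integrable_finsetSum_measure.2 fun _ _ =>
    (integrable_dirac enorm_lt_top).smul_measure ENNReal.ofReal_ne_top

variable {w} in
theorem integral_atomicMeasure (hw : ∀ ω, 0 ≤ w ω) (f : E → ℝ) :
    ∫ a, f a ∂atomicMeasure w φ = ∑ ω, w ω * f (φ ω) := by
  rw [atomicMeasure, integral_finsetSum_measure fun ω _ =>
    (integrable_dirac enorm_lt_top).smul_measure ENNReal.ofReal_ne_top]
  simp [integral_smul_measure, ENNReal.toReal_ofReal (hw _)]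

variable {w} in
theorem atomicMeasure_le_of_forall_mem {S : Set E} {T : Finset Ω} (hw : ∀ ω, 0 ≤ w ω)
    (hT : ∀ ω, φ ω ∈ S → ω ∈ T) : atomicMeasure w φ S ≤ ENNReal.ofReal (∑ ω ∈ T, w ω) := by
  rw [ENNReal.ofReal_sum_of_nonneg fun ω _ => hw ω, atomicMeasure, Measure.finsetSum_apply,
    ← Finset.sum_subset (Finset.subset_univ T) ?_]
  · refine Finset.sum_le_sum fun ω _ => ?_
    simpa using mul_le_of_le_one_right' (prob_le_one (μ := Measure.dirac (φ ω)) (s := S))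
  · intro ω _ hωT
    simp [Measure.dirac_apply, Set.indicator_of_notMem (mt (hT ω) hωT)]

end AtomicMeasure

namespace IsCenteredConfig

variable {Ω : Type*} [Fintype Ω] {n : ℕ} {w : Ω → ℝ} {B : Ω → Fin n → ℝ}
  {C : Matrix (Fin n) (Fin n) ℝ} (μ s : Fin n → ℝ)

theorem meanVec_atomicMeasure (h : IsCenteredConfig w B C) :
    meanVec (atomicMeasure w fun ω i => μ i + s i * B ω i) = μ := by
  funext i
  simp only [meanVec, integral_atomicMeasure _ h.nonneg, mul_add, Finset.sum_add_distrib,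
    ← Finset.sum_mul, h.sum_eq_one, mul_left_comm (w _) (s i), ← Finset.mul_sum, h.mean_eq_zero]
  ring

theorem covMat_atomicMeasure (h : IsCenteredConfig w B C) :
    covMat (atomicMeasure w fun ω i => μ i + s i * B ω i) = diagonal s * C * diagonal s := by
  ext i j
  have hcross : ∀ ω, w ω * ((μ i + s i * B ω i - μ i) * (μ j + s j * B ω j - μ j)) =
      s i * s j * (w ω * (B ω i * B ω j)) := fun ω => by ring
  simp only [covMat, h.meanVec_atomicMeasure, Matrix.of_apply, integral_atomicMeasure _ h.nonneg,
    hcross, ← Finset.mul_sum, h.secondMoment_eq, mul_diagonal, diagonal_mul]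
  ring

end IsCenteredConfig

theorem hasFiniteSecondMoments_atomicMeasure {Ω : Type*} [Fintype Ω] {n : ℕ} (w : Ω → ℝ)
    (φ : Ω → Fin n → ℝ) : hasFiniteSecondMoments (atomicMeasure w φ) :=
  ⟨fun _ => integrable_atomicMeasure w φ _, fun _ _ => integrable_atomicMeasure w φ _⟩

theorem one_sub_vecMulVec_mul_transpose {n : ℕ} {y : Fin n → ℝ} (hy : y ⬝ᵥ y = 1) :
    (1 - vecMulVec y y) * (1 - vecMulVec y y)ᵀ = 1 - vecMulVec y y := by
  rw [transpose_sub, transpose_one, transpose_vecMulVec, sub_mul, mul_sub, mul_sub,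
    vecMulVec_mul_vecMulVec, hy, one_smul]
  simp

theorem vecMul_one_sub_vecMulVec {n : ℕ} {y : Fin n → ℝ} (hy : y ⬝ᵥ y = 1) :
    y ᵥ* (1 - vecMulVec y y) = 0 := by
  rw [vecMul_sub, vecMul_one, vecMul_vecMulVec, hy, one_smul, sub_self]

-- The two-point law `twoPointValue z` is realised along the unit vector `y`, and the orthogonal
-- complement of `y` is filled with signed, rescaled columns of the projection `1 - y yᵀ`.
theorem exists_isCenteredConfig_one {n : ℕ} {y : Fin n → ℝ} (hy : y ⬝ᵥ y = 1) {z : ℝ}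
    (hz : 0 < z) :
    ∃ (Ω : Type) (_ : Fintype Ω) (w : Ω → ℝ) (B : Ω → Fin n → ℝ) (T : Finset Ω),
      IsCenteredConfig w B 1 ∧ (∀ ω ∉ T, y ⬝ᵥ B ω = z) ∧ ∑ ω ∈ T, w ω = z ^ 2 / (1 + z ^ 2) := by
  have : Nonempty (Fin n) := by
    rcases n with _ | n
    · simp at hy
    · exact ⟨0⟩
  have hproj := isCenteredConfig_signedColumns (1 - vecMulVec y y)
  have hconfig := (isCenteredConfig_twoPoint hz y).prod hproj
  rw [one_sub_vecMulVec_mul_transpose hy, add_sub_cancel] at hconfig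
  refine ⟨_, inferInstance, _, _, {false} ×ˢ Finset.univ, hconfig, fun ω hω => ?_, ?_⟩
  · have hω1 : ω.1 = true := by
      simpa using fun h => hω (Finset.mem_product.2 ⟨Finset.mem_singleton.2 h, Finset.mem_univ _⟩)
    have horth : ∑ i, y i * (1 - vecMulVec y y) i ω.2.2 = 0 :=
      congrFun (vecMul_one_sub_vecMulVec hy) ω.2.2
    simp only [hω1, twoPointValue, if_true, dotProduct, Pi.add_apply, Pi.smul_apply, smul_eq_mul]
    simp only [mul_add, Finset.sum_add_distrib, mul_left_comm (y _) z, ← Finset.mul_sum,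
      mul_left_comm (y _) (_ * Real.sqrt _), horth, mul_zero, add_zero]
    rw [← dotProduct, hy, mul_one]
  · have := hproj.sum_eq_one
    simp only [Finset.sum_product, Finset.sum_singleton, ← Finset.mul_sum] at this ⊢
    rw [this, mul_one]
    simp [twoPointWeight]

theorem exists_dotProduct_self_eq_one_and_eq_smul {n : ℕ} [NeZero n] (v : Fin n → ℝ) :
    ∃ y : Fin n → ℝ, y ⬝ᵥ y = 1 ∧ v = Real.sqrt (v ⬝ᵥ v) • y := by
  have hvv : 0 ≤ v ⬝ᵥ v := Finset.sum_nonneg fun i _ => mul_self_nonneg (v i)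
  by_cases hv : v = 0
  · exact ⟨Pi.single 0 1, by simp, by simp [hv]⟩
  · have hpos : 0 < Real.sqrt (v ⬝ᵥ v) :=
      Real.sqrt_pos.2 (hvv.lt_of_ne' (dotProduct_self_eq_zero.not.2 hv))
    refine ⟨(Real.sqrt (v ⬝ᵥ v))⁻¹ • v, ?_, by rw [smul_smul, mul_inv_cancel₀ hpos.ne', one_smul]⟩
    rw [smul_dotProduct, dotProduct_smul, smul_eq_mul, smul_eq_mul, ← mul_assoc]
    field_simp
    exact (Real.sq_sqrt hvv).symm

theorem exists_pos_lt_add_mul_pos {m σ k : ℝ} (hk : 0 < k) (h : 0 < m + σ * k) :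
    ∃ z, 0 < z ∧ z < k ∧ 0 < m + σ * z := by
  have hnear : ∀ᶠ z in nhds k, 0 < z ∧ 0 < m + σ * z :=
    (lt_mem_nhds hk).and ((continuous_const.add (continuous_const.mul continuous_id)).continuousAt
      |>.eventually (lt_mem_nhds h))
  obtain ⟨z, ⟨hz, hpos⟩, hzk⟩ :=
    ((hnear.filter_mono nhdsWithin_le_nhds).and (self_mem_nhdsWithin (s := Set.Iio k))).exists
  exact ⟨z, hz, hzk, hpos⟩

theorem sq_div_one_add_sq_lt {α z : ℝ} (hα : α ∈ Set.Ioo (0:ℝ) 1) (hz : 0 ≤ z)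
    (hzk : z < Real.sqrt ((1 - α) / α)) : z ^ 2 / (1 + z ^ 2) < 1 - α := by
  obtain ⟨hα0, hα1⟩ := hα
  rw [Real.lt_sqrt hz, lt_div_iff₀ hα0] at hzk
  rw [div_lt_iff₀ (by positivity)]
  nlinarith

theorem dotv_add_mul {n : ℕ} (μ s b x : Fin n → ℝ) :
    dotv (fun i => μ i + s i * b i) x = dotv μ x + (fun i => s i * x i) ⬝ᵥ b := by
  simp only [dotv, dotProduct, add_mul, Finset.sum_add_distrib]
  congr 1
  exact Finset.sum_congr rfl fun i _ => by ring

theorem exists_measure_dotv_nonpos_lt {n : ℕ} {α : ℝ} (hα : α ∈ Set.Ioo (0:ℝ) 1)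
    {x μ d : Fin n → ℝ} (hd : ∀ i, 0 ≤ d i)
    (h : 0 < dotv μ x + Real.sqrt ((1 - α) / α) * Real.sqrt (x ⬝ᵥ (diagonal d *ᵥ x))) :
    ∃ P : Measure (Fin n → ℝ), IsProbabilityMeasure P ∧ hasFiniteSecondMoments P ∧
      meanVec P = μ ∧ covMat P = diagonal d ∧ P {a | dotv a x ≤ 0} < ENNReal.ofReal (1 - α) := by
  set s : Fin n → ℝ := fun i => Real.sqrt (d i)
  set v : Fin n → ℝ := fun i => s i * x i
  have hq : x ⬝ᵥ (diagonal d *ᵥ x) = v ⬝ᵥ v := Finset.sum_congr rfl fun i _ => by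
    simp only [mulVec_diagonal, v, s]
    linear_combination x i ^ 2 * (Real.mul_self_sqrt (hd i)).symm
  have : NeZero n := ⟨by rintro rfl; simp [dotv] at h⟩
  obtain ⟨y, hy, hvy⟩ := exists_dotProduct_self_eq_one_and_eq_smul v
  rw [hq, mul_comm] at h
  obtain ⟨z, hz, hzk, hpos⟩ :=
    exists_pos_lt_add_mul_pos (Real.sqrt_pos.2 (div_pos (by linarith [hα.2]) hα.1)) h
  obtain ⟨Ω, _, w, B, T, hB, hBT, hwT⟩ := exists_isCenteredConfig_one hy hz
  refine ⟨atomicMeasure w fun ω i => μ i + s i * B ω i,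
    isProbabilityMeasure_atomicMeasure _ hB.nonneg hB.sum_eq_one,
    hasFiniteSecondMoments_atomicMeasure _ _, hB.meanVec_atomicMeasure μ s, ?_, ?_⟩
  · rw [hB.covMat_atomicMeasure, mul_one, diagonal_mul_diagonal]
    exact congrArg diagonal (funext fun i => Real.mul_self_sqrt (hd i))
  · have hT : ∀ ω, (fun i => μ i + s i * B ω i) ∈ {a | dotv a x ≤ 0} → ω ∈ T := by
      intro ω hω
      by_contra hωT
      have : dotv (fun i => μ i + s i * B ω i) x = dotv μ x + Real.sqrt (v ⬝ᵥ v) * z := by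
        rw [dotv_add_mul, ← hBT ω hωT, ← smul_eq_mul, ← smul_dotProduct, ← hvy]
      rw [Set.mem_ofPred_eq, this] at hω
      exact hω.not_gt hpos
    calc _ ≤ ENNReal.ofReal (∑ ω ∈ T, w ω) := atomicMeasure_le_of_forall_mem _ hB.nonneg hT
      _ < ENNReal.ofReal (1 - α) := by
        rw [hwT]
        exact (ENNReal.ofReal_lt_ofReal_iff (by linarith [hα.2])).2
          (sq_div_one_add_sq_lt hα hz.le hzk)

theorem euclNorm_diagonal_sqrt_mulVec {n : ℕ} {d : Fin n → ℝ} (hd : ∀ i, 0 ≤ d i)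
    (x : Fin n → ℝ) :
    euclNorm ((diagonal fun i => Real.sqrt (d i)) *ᵥ x) = Real.sqrt (x ⬝ᵥ (diagonal d *ᵥ x)) := by
  refine congrArg Real.sqrt (Finset.sum_congr rfl fun i _ => ?_)
  simp only [mulVec_diagonal]
  linear_combination x i ^ 2 * Real.sq_sqrt (hd i)

/-- Lemma 5 of the paper: diagonal-covariance special case. -/
theorem stmt10 {n : ℕ} (α : ℝ) (hα : α ∈ Set.Ioo (0:ℝ) 1)
    (x μstar σ2star : Fin n → ℝ) (hσ : ∀ i, 0 ≤ σ2star i) :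
    (∀ (P : Measure (Fin n → ℝ)), IsProbabilityMeasure P → hasFiniteSecondMoments P →
      meanVec P = μstar → covMat P = Matrix.diagonal σ2star →
      ENNReal.ofReal (1 - α) ≤ P {a | dotv a x ≤ 0}) ↔
    dotv μstar x + Real.sqrt ((1 - α) / α) *
      euclNorm ((Matrix.diagonal fun i => Real.sqrt (σ2star i)).mulVec x) ≤ 0 := by
  rw [euclNorm_diagonal_sqrt_mulVec hσ]
  constructor
  · intro h
    by_contra! hpos
    obtain ⟨P, hP, hmom, hmean, hcov, hlt⟩ := exists_measure_dotv_nonpos_lt hα hσ hpos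
    exact (h P hP hmom hmean hcov).not_gt hlt
  · rintro h P hP hmom rfl hcov
    exact ofReal_one_sub_le_measure_dotv_nonpos hmom hα (hcov ▸ h)
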